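/- Let λ ∈ ℂ with |λ| = 1 and let l ∈ ℕ, l ≥ 1. Define Ω_λ(m) = min_{2 ≤ k ≤ m} |λᵏ − λ| for m ≥ 2. Then Ω_{λˡ}(m) ≥ Ω_λ((m−1)l + 1) for all m ≥ 2. Consequently, if λ is a Bruno number then so is λˡ. -/

import Mathlib

open Topology Filter

/-- `Ω_λ(m) = min_{2 ≤ k ≤ m} |λᵏ − λ|`. -/
noncomputable def Omega (lam : ℂ) (m : ℕ) : ℝ :=
  sInf ((fun k : ℕ => ‖lam ^ k - lam‖) '' Set.Icc 2 m)

/-- `λ` (of modulus one) is a Bruno number: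
`Σ_{k≥1} 2^{−k} log(1/Ω_λ(2^{k+1})) < +∞`. -/
def IsBruno (lam : ℂ) : Prop :=
  ‖lam‖ = 1 ∧
    Summable (fun j : ℕ => ((1 : ℝ) / 2) ^ (j + 1) * Real.log (1 / Omega lam (2 ^ (j + 2))))

/-!
Since `|λ| = 1`, `(λˡ)ᵏ − λˡ = λ^{l−1} (λ^{(k−1)l+1} − λ)` has the same modulus as
`λ^{(k−1)l+1} − λ`, and `2 ≤ (k−1)l+1 ≤ (m−1)l+1` for `2 ≤ k ≤ m`; this gives the inequality.
As `(m−1)l+1 ≤ m·2ˡ` and `Ω_λ` is antitone, the `j`-th term of the Bruno series of `λˡ` is at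
most `2ˡ` times the `(j+l)`-th term of that of `λ`, while `Ω ≤ 2` bounds every term below by
`−2^{−j−1} log 2`. If `λᵏ = λ` for some `k ≥ 2`, then `Ω_{λˡ}` vanishes from `k` on and
the Bruno series of `λˡ` has finitely many nonzero terms (`log (1/0) = 0` in Lean).
-/

lemma Summable.of_le_of_le {ι : Type*} {f g h : ι → ℝ} (hg : Summable g) (hh : Summable h)
    (hgf : ∀ i, g i ≤ f i) (hfh : ∀ i, f i ≤ h i) : Summable f := by
  simpa using (Summable.of_nonneg_of_le (fun i => sub_nonneg.2 (hgf i))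
    (fun i => sub_le_sub_right (hfh i) _) (hh.sub hg)).add hg

section Omega

variable (lam : ℂ)

lemma bddBelow_Omega_image (m : ℕ) :
    BddBelow ((fun k : ℕ => ‖lam ^ k - lam‖) '' Set.Icc 2 m) :=
  ⟨0, by rintro _ ⟨k, -, rfl⟩; exact norm_nonneg _⟩

lemma Omega_image_nonempty {m : ℕ} (hm : 2 ≤ m) :
    ((fun k : ℕ => ‖lam ^ k - lam‖) '' Set.Icc 2 m).Nonempty :=
  ⟨_, 2, ⟨le_rfl, hm⟩, rfl⟩

lemma Omega_nonneg (m : ℕ) : 0 ≤ Omega lam m :=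
  Real.sInf_nonneg (by rintro _ ⟨k, -, rfl⟩; exact norm_nonneg _)

lemma Omega_le_norm_pow_sub {k m : ℕ} (hk : 2 ≤ k) (hkm : k ≤ m) :
    Omega lam m ≤ ‖lam ^ k - lam‖ :=
  csInf_le (bddBelow_Omega_image lam m) ⟨k, ⟨hk, hkm⟩, rfl⟩

lemma Omega_le_Omega {m n : ℕ} (hm : 2 ≤ m) (hmn : m ≤ n) : Omega lam n ≤ Omega lam m :=
  csInf_le_csInf (bddBelow_Omega_image lam n) (Omega_image_nonempty lam hm)
    (Set.image_mono (Set.Icc_subset_Icc_right hmn))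

lemma Omega_le_two (hmod : ‖lam‖ = 1) {m : ℕ} (hm : 2 ≤ m) : Omega lam m ≤ 2 :=
  calc Omega lam m ≤ ‖lam ^ 2 - lam‖ := Omega_le_norm_pow_sub lam le_rfl hm
    _ ≤ ‖lam ^ 2‖ + ‖lam‖ := norm_sub_le _ _
    _ = 2 := by rw [norm_pow, hmod]; norm_num

lemma Omega_pos {m : ℕ} (hm : 2 ≤ m) (h : ∀ k, 2 ≤ k → lam ^ k ≠ lam) : 0 < Omega lam m := by
  obtain ⟨k, ⟨hk, -⟩, hmin⟩ :=
    (Omega_image_nonempty lam hm).csInf_mem ((Set.finite_Icc 2 m).image _)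
  rw [Omega, ← hmin]
  exact norm_pos_iff.2 (sub_ne_zero.2 (h k hk))

lemma Omega_eq_zero_of_pow_eq_self {k m : ℕ} (hk : 2 ≤ k) (hkm : k ≤ m) (h : lam ^ k = lam) :
    Omega lam m = 0 :=
  le_antisymm (by simpa [h] using Omega_le_norm_pow_sub lam hk hkm) (Omega_nonneg lam m)

lemma pow_pow_sub_pow {l k : ℕ} (hl : 1 ≤ l) (hk : 1 ≤ k) :
    (lam ^ l) ^ k - lam ^ l = lam ^ (l - 1) * (lam ^ ((k - 1) * l + 1) - lam) := by
  obtain ⟨t, rfl⟩ := Nat.exists_eq_add_of_le' hl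
  obtain ⟨r, rfl⟩ := Nat.exists_eq_add_of_le' hk
  simp only [Nat.add_sub_cancel]
  ring

lemma Omega_le_Omega_pow (hmod : ‖lam‖ = 1) {l m : ℕ} (hl : 1 ≤ l) (hm : 2 ≤ m) :
    Omega lam ((m - 1) * l + 1) ≤ Omega (lam ^ l) m := by
  refine le_csInf (Omega_image_nonempty _ hm) ?_
  rintro _ ⟨k, ⟨hk, hkm⟩, rfl⟩
  dsimp only
  rw [pow_pow_sub_pow lam hl (by omega), norm_mul, norm_pow, hmod, one_pow, one_mul]
  have : 1 ≤ (k - 1) * l := Nat.one_le_iff_ne_zero.2 (Nat.mul_ne_zero (by omega) (by omega))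
  exact Omega_le_norm_pow_sub lam (by omega) (by gcongr)

lemma Omega_mul_two_pow_le_Omega_pow (hmod : ‖lam‖ = 1) {l m : ℕ} (hl : 1 ≤ l) (hm : 2 ≤ m) :
    Omega lam (m * 2 ^ l) ≤ Omega (lam ^ l) m := by
  have : 1 ≤ (m - 1) * l := Nat.one_le_iff_ne_zero.2 (Nat.mul_ne_zero (by omega) (by omega))
  refine (Omega_le_Omega lam (by omega) ?_).trans (Omega_le_Omega_pow lam hmod hl hm)
  calc (m - 1) * l + 1 ≤ m * l := by
        rw [Nat.sub_one_mul]; have := Nat.le_mul_of_pos_left l (by omega : 0 < m); omega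
    _ ≤ m * 2 ^ l := Nat.mul_le_mul_left _ Nat.lt_two_pow_self.le

end Omega

section Bruno

noncomputable def brunoTerm (lam : ℂ) (j : ℕ) : ℝ :=
  ((1 : ℝ) / 2) ^ (j + 1) * Real.log (1 / Omega lam (2 ^ (j + 2)))

variable (lam : ℂ)

lemma two_le_two_pow_add_two (j : ℕ) : 2 ≤ 2 ^ (j + 2) :=
  Nat.le_self_pow (by omega) 2

lemma summable_brunoTerm_of_pow_eq_self {k : ℕ} (hk : 2 ≤ k) (h : lam ^ k = lam) :
    Summable (brunoTerm lam) := by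
  refine summable_of_ne_finset_zero (s := Finset.range k) fun j hj => ?_
  have hkj : k ≤ 2 ^ (j + 2) :=
    calc k ≤ j := by simpa using hj
      _ ≤ 2 ^ (j + 2) :=
        (Nat.lt_two_pow_self.trans (Nat.pow_lt_pow_right (by omega) (by omega))).le
  rw [brunoTerm, Omega_eq_zero_of_pow_eq_self lam hk hkj h, div_zero, Real.log_zero, mul_zero]

lemma neg_log_two_le_log_one_div_Omega (hmod : ‖lam‖ = 1) {m : ℕ} (hm : 2 ≤ m) :
    -Real.log 2 ≤ Real.log (1 / Omega lam m) := by
  rcases (Omega_nonneg lam m).eq_or_lt with h | h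
  · simp [← h, Real.log_nonneg one_le_two]
  · rw [← Real.log_inv, inv_eq_one_div]
    gcongr
    exact Omega_le_two lam hmod hm

lemma neg_le_brunoTerm (hmod : ‖lam‖ = 1) (j : ℕ) :
    -(((1 : ℝ) / 2) ^ (j + 1) * Real.log 2) ≤ brunoTerm lam j := by
  rw [brunoTerm, ← mul_neg]
  gcongr
  exact neg_log_two_le_log_one_div_Omega lam hmod (two_le_two_pow_add_two j)

lemma brunoTerm_pow_le (hmod : ‖lam‖ = 1) {l : ℕ} (hl : 1 ≤ l)
    (h : ∀ k, 2 ≤ k → lam ^ k ≠ lam) (j : ℕ) :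
    brunoTerm (lam ^ l) j ≤ 2 ^ l * brunoTerm lam (j + l) := by
  have hpos : 0 < Omega lam (2 ^ (j + l + 2)) :=
    Omega_pos lam (two_le_two_pow_add_two _) h
  have hle : Omega lam (2 ^ (j + l + 2)) ≤ Omega (lam ^ l) (2 ^ (j + 2)) := by
    have := Omega_mul_two_pow_le_Omega_pow lam hmod hl (two_le_two_pow_add_two j)
    rwa [← pow_add, Nat.add_right_comm] at this
  calc brunoTerm (lam ^ l) j
      ≤ ((1 : ℝ) / 2) ^ (j + 1) * Real.log (1 / Omega lam (2 ^ (j + l + 2))) := by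
        unfold brunoTerm
        gcongr
        exact one_div_pos.2 (hpos.trans_le hle)
    _ = 2 ^ l * brunoTerm lam (j + l) := by
        rw [brunoTerm, ← mul_assoc]
        congr 1
        rw [show j + l + 1 = l + (j + 1) by ring, pow_add _ l, ← mul_assoc, ← mul_pow]
        norm_num

lemma summable_brunoTerm_pow (hmod : ‖lam‖ = 1) {l : ℕ} (hl : 1 ≤ l)
    (hsum : Summable (brunoTerm lam)) : Summable (brunoTerm (lam ^ l)) := by
  by_cases hper : ∃ k, 2 ≤ k ∧ lam ^ k = lam
  · obtain ⟨k, hk, h⟩ := hper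
    exact summable_brunoTerm_of_pow_eq_self _ hk (by rw [← pow_mul, mul_comm, pow_mul, h])
  · push Not at hper
    have hmodl : ‖lam ^ l‖ = 1 := by rw [norm_pow, hmod, one_pow]
    exact Summable.of_le_of_le
      (((summable_nat_add_iff 1).2 summable_geometric_two).mul_right (Real.log 2)).neg
      (((summable_nat_add_iff l).2 hsum).mul_left _) (neg_le_brunoTerm _ hmodl)
      (brunoTerm_pow_le lam hmod hl hper)

end Bruno

/-- For `|λ| = 1` and `l ≥ 1` one has `Ω_{λˡ}(m) ≥ Ω_λ((m−1)l + 1)` for all `m ≥ 2`;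
consequently, if `λ` is a Bruno number then so is `λˡ`. -/
theorem bruno_pow (lam : ℂ) (hmod : ‖lam‖ = 1) (l : ℕ) (hl : 1 ≤ l) :
    (∀ m : ℕ, 2 ≤ m → Omega lam ((m - 1) * l + 1) ≤ Omega (lam ^ l) m) ∧
    (IsBruno lam → IsBruno (lam ^ l)) :=
  ⟨fun _ hm => Omega_le_Omega_pow lam hmod hl hm,
    fun ⟨_, hsum⟩ => ⟨by rw [norm_pow, hmod, one_pow], summable_brunoTerm_pow lam hmod hl hsum⟩⟩
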